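/- Let 𝒰 and 𝒳 be nonempty finite types, P_U a PMF on 𝒰, P_X a PMF on 𝒳 with P_X x > 0 for every x, and for each u a perturbation J(·|u) : 𝒳 → ℝ satisfying ∑ x, J(x|u) = 0 for every u and the consistency condition ∑ u, P_U u * J(x|u) = 0 for every x. For ε near 0 define the joint PMF p_ε(u,x) = P_U u * (P_X x + ε·J(x|u)). Then the function ε ↦ I_ε(U;X) − (ε²/2) · ∑ u, P_U u * ∑ x, (J(x|u))² / P_X x is O(|ε|³) as ε → 0, where I_ε(U;X) denotes the mutual information of the joint PMF p_ε. -/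

import Mathlib

/-!
The perturbation keeps both marginals fixed: the row sums of `p_ε` are `P_U` because each
`J(·|u)` sums to zero, and the column sums are `P_X` by the consistency condition. Hence
`I_ε(U;X) = ∑_u P_U(u) · D(P_X + εJ(·|u) ‖ P_X)`, and each divergence term is
`P_X(x) · φ(εJ(x|u)/P_X(x))` with `φ(t) = (1+t) log(1+t) = t + t²/2 + O(t³)`.
The linear terms cancel because `∑_x J(x|u) = 0`, leaving the quadratic form plus `O(ε³)`.
-/

open Finset Filter Topology Asymptotics

/-- Mutual information of a joint PMF `p` on a finite product, with the convention
that a summand is `0` when `p (u, a) = 0`.  The marginals are computed from `p`. -/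
noncomputable def mutInfo {α β : Type*} [Fintype α] [Fintype β] (p : α → β → ℝ) : ℝ :=
  ∑ a, ∑ b, if p a b = 0 then 0
    else p a b * Real.log (p a b / ((∑ b', p a b') * (∑ a', p a' b)))

namespace Real

theorem log_one_add_sub_taylor_isBigO :
    (fun t : ℝ => log (1 + t) - (t - t ^ 2 / 2)) =O[𝓝 0] fun t => t ^ 3 := by
  refine isBigO_iff.2 ⟨2, ?_⟩
  filter_upwards [eventually_abs_sub_lt 0 (by norm_num : (0 : ℝ) < 1 / 2)] with t ht
  rw [sub_zero] at ht
  have h := abs_log_sub_add_sum_range_le (x := -t) (by rw [abs_neg]; linarith) 2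
  norm_num [sum_range_succ] at h
  rw [norm_eq_abs, norm_pow, norm_eq_abs]
  calc |log (1 + t) - (t - t ^ 2 / 2)| = |-t + t ^ 2 / 2 + log (1 + t)| := by congr 1; ring
    _ ≤ |t| ^ 3 / (1 - |t|) := h
    _ ≤ 2 * |t| ^ 3 := by
      rw [div_le_iff₀ (by linarith)]; nlinarith [pow_nonneg (abs_nonneg t) 3]

theorem one_add_mul_log_one_add_sub_taylor_isBigO :
    (fun t : ℝ => (1 + t) * log (1 + t) - t - t ^ 2 / 2) =O[𝓝 0] fun t => t ^ 3 := by
  have hbounded : (fun t : ℝ => 1 + t) =O[𝓝 0] fun _ => (1 : ℝ) :=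
    (continuous_const.add continuous_id).tendsto' 0 1 (by norm_num) |>.isBigO_one ℝ
  -- `(1 + t) log (1 + t) - t - t²/2 = (1 + t) (log (1 + t) - (t - t²/2)) - t³/2`
  have hprod := hbounded.mul log_one_add_sub_taylor_isBigO
  simp only [one_mul] at hprod
  refine (hprod.sub ((isBigO_refl (fun t : ℝ => t ^ 3) _).const_mul_left (1 / 2))).congr_left
    fun t => ?_
  ring

end Real

open Real

theorem mul_log_div_sub_taylor_isBigO {p : ℝ} (hp : p ≠ 0) (j : ℝ) :
    (fun ε : ℝ => (p + ε * j) * log ((p + ε * j) / p) - ε * j - ε ^ 2 / 2 * (j ^ 2 / p))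
      =O[𝓝 0] fun ε => ε ^ 3 := by
  have hlin : Tendsto (fun ε : ℝ => ε * j / p) (𝓝 0) (𝓝 0) :=
    ((continuous_id.mul continuous_const).div_const p).tendsto' 0 0 (by simp)
  have hcube : (fun ε : ℝ => (ε * j / p) ^ 3) =O[𝓝 0] fun ε => ε ^ 3 :=
    ((isBigO_refl _ _).const_mul_left ((j / p) ^ 3)).congr_left fun ε => by ring
  refine ((one_add_mul_log_one_add_sub_taylor_isBigO.comp_tendsto hlin).trans hcube
    |>.const_mul_left p).congr_left fun ε => ?_
  simp only [Function.comp_apply]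
  field_simp

theorem mutInfo_mul_of_sum_eq_one {α β : Type*} [Fintype α] [Fintype β]
    (a : α → ℝ) (q : α → β → ℝ) (b : β → ℝ)
    (hq : ∀ u, ∑ x, q u x = 1) (hb : ∀ x, ∑ u, a u * q u x = b x) :
    mutInfo (fun u x => a u * q u x) = ∑ u, a u * ∑ x, q u x * log (q u x / b x) := by
  unfold mutInfo
  refine sum_congr rfl fun u _ => ?_
  rw [mul_sum]
  refine sum_congr rfl fun x _ => ?_
  rw [← mul_sum, hq, mul_one, hb]
  split_ifs with h
  · rcases mul_eq_zero.1 h with h | h <;> simp [h]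
  · rw [mul_div_mul_left _ _ (left_ne_zero_of_mul h), mul_assoc]

theorem mutual_information_local_quadratic_approx_general
    {𝒰 𝒳 : Type*} [Fintype 𝒰] [Fintype 𝒳]
    (PU : 𝒰 → ℝ) (hPU1 : ∑ u, PU u = 1)
    (PX : 𝒳 → ℝ) (hPX0 : ∀ x, 0 < PX x) (hPX1 : ∑ x, PX x = 1)
    (J : 𝒳 → 𝒰 → ℝ)
    (hJsum : ∀ u, ∑ x, J x u = 0)
    (hJcons : ∀ x, ∑ u, PU u * J x u = 0) :
    (fun ε : ℝ =>
        mutInfo (fun u x => PU u * (PX x + ε * J x u))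
          - ε ^ 2 / 2 * ∑ u, PU u * ∑ x, (J x u) ^ 2 / PX x)
      =O[𝓝 0] (fun ε : ℝ => |ε| ^ 3) := by
  have hrow : ∀ ε u, ∑ x, (PX x + ε * J x u) = 1 := fun ε u => by
    rw [sum_add_distrib, ← mul_sum, hJsum, hPX1, mul_zero, add_zero]
  have hcol : ∀ ε x, ∑ u, PU u * (PX x + ε * J x u) = PX x := fun ε x => by
    simp only [mul_add, sum_add_distrib, ← sum_mul, hPU1, mul_left_comm (PU _) ε, ← mul_sum,
      hJcons, one_mul, mul_zero, add_zero]
  have hremainder := IsBigO.sum fun u (_ : u ∈ univ) =>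
    (IsBigO.sum fun x (_ : x ∈ univ) =>
      mul_log_div_sub_taylor_isBigO (hPX0 x).ne' (J x u)).const_mul_left (PU u)
  simp only [← abs_pow, isBigO_abs_right]
  refine hremainder.congr_left fun ε => ?_
  rw [mutInfo_mul_of_sum_eq_one _ _ _ (hrow ε) (hcol ε)]
  simp only [Finset.sum_apply, sum_sub_distrib, ← mul_sum, hJsum, mul_zero, sub_zero, mul_sub,
    mul_left_comm (PU _) (ε ^ 2 / 2)]

/-- Under zero-sum perturbations `J(·|u)` of a strictly positive
reference PMF `P_X` satisfying the consistency condition, the mutual information of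
the joint PMF `p_ε(u,x) = P_U u * (P_X x + ε·J(x|u))` agrees with the quadratic form
`(ε²/2) ∑_u P_U u ∑_x (J(x|u))²/(P_X x)` up to an `O(|ε|³)` error as `ε → 0`. -/
theorem mutual_information_local_quadratic_approx
    {𝒰 𝒳 : Type*} [Fintype 𝒰] [Nonempty 𝒰] [Fintype 𝒳] [Nonempty 𝒳]
    (PU : 𝒰 → ℝ) (hPU0 : ∀ u, 0 ≤ PU u) (hPU1 : ∑ u, PU u = 1)
    (PX : 𝒳 → ℝ) (hPX0 : ∀ x, 0 < PX x) (hPX1 : ∑ x, PX x = 1)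
    (J : 𝒳 → 𝒰 → ℝ)
    (hJsum : ∀ u, ∑ x, J x u = 0)
    (hJcons : ∀ x, ∑ u, PU u * J x u = 0) :
    (fun ε : ℝ =>
        mutInfo (fun u x => PU u * (PX x + ε * J x u))
          - ε ^ 2 / 2 * ∑ u, PU u * ∑ x, (J x u) ^ 2 / PX x)
      =O[𝓝 0] (fun ε : ℝ => |ε| ^ 3) :=
  mutual_information_local_quadratic_approx_general PU hPU1 PX hPX0 hPX1 J hJsum hJcons
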